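/- Let W and T be real n×n matrices with W symmetric positive definite and T symmetric positive semidefinite, and let μ_min and μ_max be the smallest and largest eigenvalues of S = W^{-1/2} T W^{-1/2}. Assume 1 ≤ μ_min and 1 < μ_max. If 0 < α < (μ_max+1)/(μ_max-1) and β > (μ_max-1)/(μ_max+1), then ρ(G_{α,β}) < 1. -/

import Mathlib

/-!
With `R = W^{1/2}` and `S = U diag(μ) Uᵀ` (`U` orthogonal), the matrices `P = R U` and `Q = Uᵀ R`
satisfy `W = P Q` and `T = P diag(μ) Q`, so every pencil `c W + d T` equals `P diag(c + d μ) Q`.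
Hence `G_{α,β} = Q⁻¹ diag(λ(μᵢ)) Q` with `λ(μ) = (μ - β)(1 - α μ) / ((1 + β μ)(α + μ))`, and the
spectrum of `G_{α,β}` is `{λ(μᵢ)}`. For `1 ≤ μ ≤ μmax` the bounds on `α` and `β` give
`|μ - β| < 1 + β μ` and `|1 - α μ| < α + μ`, so every `|λ(μᵢ)| < 1`.
-/

open Matrix

/-- The old Mathlib `Matrix.PosSemidef.sqrt` (removed upstream), with its original definition. -/
noncomputable def Matrix.PosSemidef.sqrt {n : Type*} [Fintype n] [DecidableEq n]
    {A : Matrix n n ℝ} (hA : A.PosSemidef) : Matrix n n ℝ :=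
  hA.1.eigenvectorUnitary.1 * diagonal ((↑) ∘ (√·) ∘ hA.1.eigenvalues) *
    (star hA.1.eigenvectorUnitary : Matrix n n ℝ)

theorem spectralRadius_lt_of_spectrum_eq_range {𝕜 A ι : Type*} [NormedField 𝕜] [Ring A]
    [Algebra 𝕜 A] [Fintype ι] {a : A} {f : ι → 𝕜} (ha : spectrum 𝕜 a = Set.range f)
    {r : NNReal} (hr : 0 < r) (hf : ∀ i, ‖f i‖₊ < r) : spectralRadius 𝕜 a < r := by
  rw [spectralRadius, ha, iSup_range, ← Finset.sup_univ_eq_iSup,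
    Finset.sup_lt_iff (by simpa using hr)]
  exact fun i _ ↦ ENNReal.coe_lt_coe.mpr (hf i)

namespace Matrix

variable {ι : Type*} [Fintype ι] [DecidableEq ι]

theorem PosSemidef.sqrt_mul_self {A : Matrix ι ι ℝ} (hA : A.PosSemidef) :
    hA.sqrt * hA.sqrt = A := by
  set U : Matrix ι ι ℝ := (hA.1.eigenvectorUnitary : Matrix ι ι ℝ)
  have hUU : star U * U = 1 := Unitary.coe_star_mul_self hA.1.eigenvectorUnitary
  conv_rhs => rw [hA.1.spectral_theorem, Unitary.conjStarAlgAut_apply]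
  calc hA.sqrt * hA.sqrt
      = U * (diagonal ((↑) ∘ (√·) ∘ hA.1.eigenvalues) * (star U * U) *
          diagonal ((↑) ∘ (√·) ∘ hA.1.eigenvalues)) * star U := by
        simp only [PosSemidef.sqrt, U, Matrix.mul_assoc]
    _ = _ := by
        rw [hUU, Matrix.mul_one, diagonal_mul_diagonal]
        congr 3
        funext i
        simp [Real.mul_self_sqrt (hA.eigenvalues_nonneg i)]

theorem spectrum_map_ofReal_inv_mul_diagonal_mul {Q : Matrix ι ι ℝ} (hQ : IsUnit Q.det)
    (d : ι → ℝ) :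
    spectrum ℂ ((Q⁻¹ * diagonal d * Q).map Complex.ofReal) = Set.range (fun i ↦ (d i : ℂ)) := by
  let u : (Matrix ι ι ℂ)ˣ :=
    Units.map (Complex.ofRealHom.mapMatrix : Matrix ι ι ℝ →+* Matrix ι ι ℂ) (nonsingInvUnit Q hQ)
  have hmap : (Q⁻¹ * diagonal d * Q).map Complex.ofReal
      = (↑u⁻¹ : Matrix ι ι ℂ) * diagonal (fun i ↦ (d i : ℂ)) * (u : Matrix ι ι ℂ) := by
    change Complex.ofRealHom.mapMatrix (Q⁻¹ * diagonal d * Q)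
      = Complex.ofRealHom.mapMatrix Q⁻¹ * _ * Complex.ofRealHom.mapMatrix Q
    rw [map_mul, map_mul, RingHom.mapMatrix_apply _ (diagonal d), diagonal_map (map_zero _)]
    rfl
  rw [hmap, spectrum.units_conjugate', spectrum_diagonal]

theorem inv_mul_eq_conj_diagonal {P Q : Matrix ι ι ℝ} (hP : IsUnit P.det)
    {a : ι → ℝ} (ha : ∀ i, a i ≠ 0) (b : ι → ℝ) :
    (P * diagonal a * Q)⁻¹ * (P * diagonal b * Q)
      = Q⁻¹ * diagonal (fun i ↦ (a i)⁻¹ * b i) * Q := by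
  have hDa : (diagonal a)⁻¹ = diagonal (fun i ↦ (a i)⁻¹) := by
    refine inv_eq_left_inv ?_
    rw [diagonal_mul_diagonal, ← diagonal_one]
    exact congrArg diagonal (funext fun i ↦ inv_mul_cancel₀ (ha i))
  rw [Matrix.mul_inv_rev, Matrix.mul_inv_rev, hDa, ← diagonal_mul_diagonal]
  simp only [Matrix.mul_assoc]
  rw [← Matrix.mul_assoc P⁻¹ P, nonsing_inv_mul _ hP, Matrix.one_mul]

theorem PosDef.exists_congr_diagonal {W T S : Matrix ι ι ℝ} (hW : W.PosDef)
    (hSdef : S = (hW.posSemidef.sqrt)⁻¹ * T * (hW.posSemidef.sqrt)⁻¹) (hS : S.IsHermitian) :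
    ∃ P Q : Matrix ι ι ℝ, IsUnit P.det ∧ IsUnit Q.det ∧
      W = P * Q ∧ T = P * diagonal hS.eigenvalues * Q := by
  set R := hW.posSemidef.sqrt
  set U : Matrix ι ι ℝ := (hS.eigenvectorUnitary : Matrix ι ι ℝ)
  have hRR : R * R = W := hW.posSemidef.sqrt_mul_self
  have hR : IsUnit R.det := by
    rw [← isUnit_mul_self_iff, ← det_mul, hRR]
    exact hW.isUnit.map detMonoidHom
  have hUU : U * star U = 1 := Unitary.coe_mul_star_self hS.eigenvectorUnitary
  have hWPQ : W = R * U * (star U * R) := by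
    rw [Matrix.mul_assoc, ← Matrix.mul_assoc U, hUU, Matrix.one_mul, hRR]
  have hT : T = R * S * R := by
    simp only [hSdef, Matrix.mul_assoc]
    rw [nonsing_inv_mul _ hR, Matrix.mul_one, mul_nonsing_inv_cancel_left _ _ hR]
  have hPQ : IsUnit (R * U * (star U * R)).det := hWPQ ▸ hW.isUnit.map detMonoidHom
  rw [det_mul] at hPQ
  refine ⟨R * U, star U * R, isUnit_of_mul_isUnit_left hPQ, isUnit_of_mul_isUnit_right hPQ,
    hWPQ, ?_⟩
  conv_lhs => rw [hT, hS.spectral_theorem, Unitary.conjStarAlgAut_apply]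
  simp only [Matrix.mul_assoc]
  rfl

end Matrix

noncomputable def ttscspEigenvalue (α β μ : ℝ) : ℝ :=
  (μ - β) / (1 + β * μ) * ((1 - α * μ) / (α + μ))

theorem abs_ttscspEigenvalue_lt_one {α β μ : ℝ} (hμ : 1 ≤ μ) (hα : 0 < α)
    (hαμ : α * (μ - 1) < μ + 1) (hβμ : μ - 1 < β * (μ + 1)) : |ttscspEigenvalue α β μ| < 1 := by
  have hβ : 0 < β := by nlinarith
  have hβ' : |μ - β| < 1 + β * μ := abs_lt.mpr ⟨by nlinarith, by linarith⟩
  have hα' : |1 - α * μ| < α + μ := abs_lt.mpr ⟨by linarith, by nlinarith⟩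
  rw [ttscspEigenvalue, abs_mul, abs_div, abs_div, abs_of_pos (by positivity : 0 < 1 + β * μ),
    abs_of_pos (by positivity : 0 < α + μ)]
  exact mul_lt_one_of_nonneg_of_lt_one_left (by positivity)
    ((div_lt_one (by positivity)).mpr hβ') ((div_le_one (by positivity)).mpr hα'.le)

theorem abs_ttscspEigenvalue_lt_one_of_le {α β μ μmax : ℝ} (hμ : 1 ≤ μ) (hμmax : μ ≤ μmax)
    (hmax : 1 < μmax) (hα0 : 0 < α) (hα : α < (μmax + 1) / (μmax - 1))
    (hβ : (μmax - 1) / (μmax + 1) < β) : |ttscspEigenvalue α β μ| < 1 := by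
  have hα' : α * (μmax - 1) < μmax + 1 := (lt_div_iff₀ (by linarith)).mp hα
  have hβ' : μmax - 1 < β * (μmax + 1) := (div_lt_iff₀ (by linarith)).mp hβ
  refine abs_ttscspEigenvalue_lt_one hμ hα0 ?_ ?_
  · nlinarith
  · nlinarith

theorem ttscsp_iteration_eq_conj_diagonal {ι : Type*} [Fintype ι] [DecidableEq ι]
    {W T P Q : Matrix ι ι ℝ} {μ : ι → ℝ} (hP : IsUnit P.det) (hQ : IsUnit Q.det)
    (hW : W = P * Q) (hT : T = P * diagonal μ * Q) {α β : ℝ}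
    (hβ : ∀ i, 1 + β * μ i ≠ 0) (hα : ∀ i, α + μ i ≠ 0) :
    (W + β • T)⁻¹ * (T - β • W) * (α • W + T)⁻¹ * (W - α • T)
      = Q⁻¹ * diagonal (fun i ↦ ttscspEigenvalue α β (μ i)) * Q := by
  have hpencil : ∀ c d : ℝ, c • W + d • T = P * diagonal (fun i ↦ c + d * μ i) * Q := by
    intro c d
    have : diagonal (fun i ↦ c + d * μ i) = c • 1 + d • diagonal μ := by
      ext i j
      by_cases h : i = j <;> simp [h, one_apply]
    simp only [this, hW, hT, Matrix.mul_add, Matrix.add_mul, Matrix.mul_smul, Matrix.smul_mul,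
      Matrix.mul_one, Matrix.mul_assoc]
  have h1 : W + β • T = P * diagonal (fun i ↦ 1 + β * μ i) * Q := by
    rw [← hpencil, one_smul]
  have h2 : T - β • W = P * diagonal (fun i ↦ -β + 1 * μ i) * Q := by
    rw [← hpencil, one_smul, neg_smul, neg_add_eq_sub]
  have h3 : α • W + T = P * diagonal (fun i ↦ α + 1 * μ i) * Q := by
    rw [← hpencil, one_smul]
  have h4 : W - α • T = P * diagonal (fun i ↦ 1 + -α * μ i) * Q := by
    rw [← hpencil, neg_smul, one_smul, sub_eq_add_neg]
  rw [h1, h2, h3, h4, Matrix.mul_assoc _ (P * _ * Q)⁻¹,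
    inv_mul_eq_conj_diagonal hP hβ, inv_mul_eq_conj_diagonal hP (by simpa using hα)]
  simp only [Matrix.mul_assoc]
  rw [mul_nonsing_inv_cancel_left _ _ hQ, ← Matrix.mul_assoc (diagonal _), diagonal_mul_diagonal]
  congr 3
  funext i
  rw [ttscspEigenvalue]
  ring

theorem ttscsp_convergence_eigen_ge_one_general
    {n : ℕ}
    (W T : Matrix (Fin n) (Fin n) ℝ)
    (hW : W.PosDef)
    (S : Matrix (Fin n) (Fin n) ℝ)
    (hSdef : S = (hW.posSemidef.sqrt)⁻¹ * T * (hW.posSemidef.sqrt)⁻¹)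
    (hS : S.IsHermitian)
    (μmin μmax : ℝ)
    (hμmin : μmin = ⨅ i, hS.eigenvalues i)
    (hμmax : μmax = ⨆ i, hS.eigenvalues i)
    (hmin1 : 1 ≤ μmin) (hmax1 : 1 < μmax)
    (α β : ℝ)
    (hα0 : 0 < α) (hα2 : α < (μmax + 1) / (μmax - 1))
    (hβ1 : (μmax - 1) / (μmax + 1) < β) :
    spectralRadius ℂ
      (((W + β • T)⁻¹ * (T - β • W) * (α • W + T)⁻¹ * (W - α • T)).map Complex.ofReal) < 1 := by
  obtain ⟨P, Q, hP, hQ, hWPQ, hTPQ⟩ := hW.exists_congr_diagonal hSdef hS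
  have hge : ∀ i, 1 ≤ hS.eigenvalues i := fun i ↦
    hmin1.trans (hμmin ▸ ciInf_le (Set.finite_range _).bddBelow i)
  have hle : ∀ i, hS.eigenvalues i ≤ μmax := fun i ↦
    hμmax ▸ le_ciSup (Set.finite_range _).bddAbove i
  have hβ0 : 0 < β := (div_pos (by linarith) (by linarith)).trans hβ1
  rw [ttscsp_iteration_eq_conj_diagonal hP hQ hWPQ hTPQ
    (fun i ↦ by nlinarith [hge i]) (fun i ↦ by linarith [hge i])]
  refine spectralRadius_lt_of_spectrum_eq_range
    (spectrum_map_ofReal_inv_mul_diagonal_mul hQ _) one_pos fun i ↦ ?_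
  rw [← NNReal.coe_lt_coe, coe_nnnorm, Complex.norm_real, Real.norm_eq_abs, NNReal.coe_one]
  exact abs_ttscspEigenvalue_lt_one_of_le (hge i) (hle i) hmax1 hα0 hα2 hβ1

/-- **Remark 1, second case.** If all eigenvalues of `S = W^{-1/2} T W^{-1/2}` are at least one
(i.e. `1 ≤ μmin`) and `1 < μmax`, then `0 < α < (μmax+1)/(μmax-1)` and `β > (μmax-1)/(μmax+1)`
imply that the spectral radius of the TTSCSP iteration matrix is less than one. -/
theorem ttscsp_convergence_eigen_ge_one
    {n : ℕ} (hn : 0 < n)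
    (W T : Matrix (Fin n) (Fin n) ℝ)
    (hW : W.PosDef) (hT : T.PosSemidef)
    (S : Matrix (Fin n) (Fin n) ℝ)
    (hSdef : S = (hW.posSemidef.sqrt)⁻¹ * T * (hW.posSemidef.sqrt)⁻¹)
    (hS : S.IsHermitian)
    (μmin μmax : ℝ)
    (hμmin : μmin = ⨅ i, hS.eigenvalues i)
    (hμmax : μmax = ⨆ i, hS.eigenvalues i)
    (hmin1 : 1 ≤ μmin) (hmax1 : 1 < μmax)
    (α β : ℝ)
    (hα0 : 0 < α) (hα2 : α < (μmax + 1) / (μmax - 1))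
    (hβ1 : (μmax - 1) / (μmax + 1) < β) :
    spectralRadius ℂ
      (((W + β • T)⁻¹ * (T - β • W) * (α • W + T)⁻¹ * (W - α • T)).map Complex.ofReal) < 1 :=
  ttscsp_convergence_eigen_ge_one_general W T hW S hSdef hS μmin μmax hμmin hμmax hmin1 hmax1 α β
    hα0 hα2 hβ1
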